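/- arXiv:math/0209270 — 2 statements merged into one kernel-verified Lean document; each statement's English description precedes it below -/
import Mathlib

section
/- (q-binomial polynomial identity, core of Proposition 4.11.) Fix a real number q with 0 < q < 1. For natural numbers n, m define f_{n,m} ∈ ℝ[X] by f_{n,m}(x) = q^{−2mn} · xⁿ · ∏_{l=0}^{m−1} (1 − q^{−2l} x). For 0 ≤ i ≤ N define the Gaussian binomial coefficient [N choose i]_{q²} = (q²;q²)_N / ((q²;q²)_i · (q²;q²)_{N−i}), where (a;r)_j = ∏_{t=0}^{j−1} (1 − a·r^t). Define P̃_N ∈ ℝ[X] by P̃_N = ∑_{i=0}^{N} q^{2(N−2i)} · [N choose i]_{q²} · f_{N−i,i}. Then P̃_0 = 1 and for every N ≥ 0, P̃_{N+1}(x) = q²·x·P̃_N(x) − q^{−2}·(x − 1)·P̃_N(q^{−2}x). -/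
/-!
Multiplication by `x` raises the first index of `f_{n,m}` (`x f_{n,m} = q^{2m} f_{n+1,m}`), and
`p ↦ (x - 1) p(q^{-2} x)` raises the second (`f_{n,m} ↦ -f_{n,m+1}`). Hence both terms on the right
are combinations of the `f_{N+1-i,i}`, and comparing coefficients reduces the recurrence to the
`q`-Pascal rule `[N+1, i+1] = q^{2(i+1)} [N, i+1] + [N, i]`.
-/

open Polynomial

/-- The polynomial `f_{n,m}(x) = q^(−2mn) xⁿ ∏_{l<m} (1 − q^(−2l) x)` over `ℝ`. -/
noncomputable def qPolyF (q : ℝ) (n m : ℕ) : Polynomial ℝ :=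
  C ((q ^ (2 * m * n) : ℝ))⁻¹ * X ^ n *
    ∏ l ∈ Finset.range m, (1 - C ((q ^ (2 * l) : ℝ))⁻¹ * X)

/-- The `q`-Pochhammer symbol `(a; r)_j = ∏_{t<j} (1 − a rᵗ)`. -/
def qPoch (a r : ℝ) (j : ℕ) : ℝ := ∏ t ∈ Finset.range j, (1 - a * r ^ t)

/-- The Gaussian binomial coefficient `[N choose i]_{q²}`. -/
noncomputable def gaussBinom (q : ℝ) (N i : ℕ) : ℝ :=
  qPoch (q ^ 2) (q ^ 2) N / (qPoch (q ^ 2) (q ^ 2) i * qPoch (q ^ 2) (q ^ 2) (N - i))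

/-- `P̃_N = ∑_{i=0}^{N} q^(2(N−2i)) [N choose i]_{q²} f_{N−i,i}`. -/
noncomputable def pTilde (q : ℝ) (N : ℕ) : Polynomial ℝ :=
  ∑ i ∈ Finset.range (N + 1),
    C (q ^ (2 * ((N : ℤ) - 2 * (i : ℤ))) * gaussBinom q N i) * qPolyF q (N - i) i

open Finset

theorem Finset.sum_range_succ_succ_of_pascal {M : Type*} [AddCommMonoid M] (a b c : ℕ → M)
    (N : ℕ) (h_first : a 0 = b 0) (h_last : a (N + 1) = c N)
    (h_mid : ∀ i < N, a (i + 1) = b (i + 1) + c i) :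
    ∑ i ∈ range (N + 2), a i = ∑ i ∈ range (N + 1), b i + ∑ i ∈ range (N + 1), c i := by
  rw [sum_range_succ, sum_range_succ', sum_range_succ' b, sum_range_succ c,
    sum_congr rfl fun i hi => h_mid i (mem_range.mp hi), sum_add_distrib, h_first, h_last]
  abel

lemma qPoch_zero (a r : ℝ) : qPoch a r 0 = 1 := prod_range_zero _

lemma qPoch_self_succ (r : ℝ) (j : ℕ) :
    qPoch r r (j + 1) = qPoch r r j * (1 - r ^ (j + 1)) := by
  rw [qPoch, prod_range_succ, ← qPoch, pow_succ']

lemma one_sub_pow_succ_ne_zero {r : ℝ} (hr0 : 0 ≤ r) (hr1 : r ≠ 1) (t : ℕ) :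
    1 - r ^ (t + 1) ≠ 0 := by
  rw [sub_ne_zero, ne_comm, Ne, pow_eq_one_iff_of_nonneg hr0 t.succ_ne_zero]
  exact hr1

lemma qPoch_self_ne_zero {r : ℝ} (hr0 : 0 ≤ r) (hr1 : r ≠ 1) (j : ℕ) : qPoch r r j ≠ 0 :=
  prod_ne_zero_iff.mpr fun t _ => pow_succ' r t ▸ one_sub_pow_succ_ne_zero hr0 hr1 t

section GaussBinom

variable {q : ℝ} (hq : q ^ 2 ≠ 1)
include hq

lemma gaussBinom_zero_right (N : ℕ) : gaussBinom q N 0 = 1 := by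
  rw [gaussBinom, qPoch_zero, one_mul, Nat.sub_zero,
    div_self (qPoch_self_ne_zero (sq_nonneg q) hq N)]

lemma gaussBinom_self (N : ℕ) : gaussBinom q N N = 1 := by
  rw [gaussBinom, Nat.sub_self, qPoch_zero, mul_one,
    div_self (qPoch_self_ne_zero (sq_nonneg q) hq N)]

lemma gaussBinom_succ_succ {N i : ℕ} (h : i < N) :
    gaussBinom q (N + 1) (i + 1)
      = (q ^ 2) ^ (i + 1) * gaussBinom q N (i + 1) + gaussBinom q N i := by
  obtain ⟨k, rfl⟩ : ∃ k, N = i + 1 + k := ⟨N - (i + 1), by omega⟩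
  have hne := qPoch_self_ne_zero (sq_nonneg q) hq
  have hfactor := one_sub_pow_succ_ne_zero (sq_nonneg q) hq
  simp only [gaussBinom, show i + 1 + k + 1 - (i + 1) = k + 1 by omega,
    show i + 1 + k - (i + 1) = k by omega, show i + 1 + k - i = k + 1 by omega, qPoch_self_succ]
  field_simp [hne i, hne k, hfactor i, hfactor k]
  ring

end GaussBinom

section QPolyF

variable {q : ℝ}

lemma X_mul_qPolyF (hq : q ≠ 0) (n m : ℕ) :
    X * qPolyF q n m = C (q ^ (2 * m)) * qPolyF q (n + 1) m := by
  have hcancel : C (q ^ (2 * m)) * C (q ^ (2 * m))⁻¹ = 1 := by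
    rw [← C_mul, mul_inv_cancel₀ (pow_ne_zero _ hq), C_1]
  rw [qPolyF, qPolyF, show 2 * m * (n + 1) = 2 * m * n + 2 * m by ring, pow_add, mul_inv, C_mul,
    pow_succ]
  linear_combination -(C (q ^ (2 * m * n))⁻¹ * X ^ n * X *
    ∏ l ∈ range m, (1 - C (q ^ (2 * l))⁻¹ * X)) * hcancel

lemma X_sub_one_mul_qPolyF_comp (n m : ℕ) :
    (X - 1) * (qPolyF q n m).comp (C (q ^ 2)⁻¹ * X) = -qPolyF q n (m + 1) := by
  have hfactor (l : ℕ) : (1 - C (q ^ (2 * l))⁻¹ * X).comp (C (q ^ 2)⁻¹ * X)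
      = 1 - C (q ^ (2 * (l + 1)))⁻¹ * X := by
    rw [sub_comp, one_comp, mul_comp, C_comp, X_comp, mul_add_one, pow_add, mul_inv, C_mul,
      mul_assoc]
  simp only [qPolyF, mul_comp, C_comp, X_pow_comp, Polynomial.prod_comp, hfactor]
  rw [prod_range_succ' _ m, mul_pow, ← C_pow, inv_pow, ← pow_mul,
    show 2 * (m + 1) * n = 2 * m * n + 2 * n by ring, pow_add, mul_inv, C_mul]
  simp only [mul_zero, pow_zero, inv_one, C_1, one_mul]
  ring

end QPolyF

noncomputable def pTildeCoeff (q : ℝ) (N i : ℕ) : ℝ :=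
  q ^ (2 * ((N : ℤ) - 2 * (i : ℤ))) * gaussBinom q N i

lemma pTilde_eq_sum (q : ℝ) (N : ℕ) :
    pTilde q N = ∑ i ∈ range (N + 1), C (pTildeCoeff q N i) * qPolyF q (N - i) i :=
  rfl

lemma pTildeCoeff_eq {q : ℝ} (hq0 : q ≠ 0) (N i : ℕ) :
    pTildeCoeff q N i = q ^ (2 * N) / q ^ (4 * i) * gaussBinom q N i := by
  rw [pTildeCoeff, show 2 * ((N : ℤ) - 2 * (i : ℤ)) = (2 * N : ℕ) - (4 * i : ℕ) by push_cast; ring,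
    zpow_sub₀ hq0, zpow_natCast, zpow_natCast]

section PTildeCoeff

variable {q : ℝ} (hq0 : q ≠ 0) (hq : q ^ 2 ≠ 1)
include hq0 hq

lemma pTildeCoeff_succ_zero (N : ℕ) : pTildeCoeff q (N + 1) 0 = q ^ 2 * pTildeCoeff q N 0 := by
  simp only [pTildeCoeff_eq hq0, gaussBinom_zero_right hq]
  ring

lemma pTildeCoeff_succ_self (N : ℕ) :
    pTildeCoeff q (N + 1) (N + 1) = (q ^ 2)⁻¹ * pTildeCoeff q N N := by
  simp only [pTildeCoeff_eq hq0, gaussBinom_self hq]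
  field_simp
  ring

lemma pTildeCoeff_succ_succ {N i : ℕ} (h : i < N) :
    pTildeCoeff q (N + 1) (i + 1)
      = q ^ 2 * q ^ (2 * (i + 1)) * pTildeCoeff q N (i + 1) + (q ^ 2)⁻¹ * pTildeCoeff q N i := by
  simp only [pTildeCoeff_eq hq0, gaussBinom_succ_succ hq h]
  field_simp
  ring

end PTildeCoeff

lemma C_mul_X_mul_pTilde {q : ℝ} (hq0 : q ≠ 0) (N : ℕ) :
    C (q ^ 2) * X * pTilde q N
      = ∑ i ∈ range (N + 1),
          C (q ^ 2 * q ^ (2 * i) * pTildeCoeff q N i) * qPolyF q (N - i + 1) i := by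
  rw [pTilde_eq_sum, mul_sum]
  refine sum_congr rfl fun i _ => ?_
  rw [C_mul, C_mul]
  linear_combination C (q ^ 2) * C (pTildeCoeff q N i) * X_mul_qPolyF hq0 (N - i) i

lemma C_inv_mul_X_sub_one_mul_pTilde_comp (q : ℝ) (N : ℕ) :
    C (q ^ 2)⁻¹ * (X - 1) * (pTilde q N).comp (C (q ^ 2)⁻¹ * X)
      = -∑ i ∈ range (N + 1),
          C ((q ^ 2)⁻¹ * pTildeCoeff q N i) * qPolyF q (N - i) (i + 1) := by
  rw [pTilde_eq_sum, Polynomial.sum_comp, mul_sum, ← sum_neg_distrib]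
  refine sum_congr rfl fun i _ => ?_
  rw [mul_comp, C_comp, C_mul]
  linear_combination
    C (q ^ 2)⁻¹ * C (pTildeCoeff q N i) * X_sub_one_mul_qPolyF_comp (N - i) i

/-- `q`-binomial polynomial identity (core of Proposition 4.11): `P̃_0 = 1` and
`P̃_{N+1}(x) = q² x P̃_N(x) − q^(−2) (x − 1) P̃_N(q^(−2) x)`. -/
theorem pTilde_recurrence (q : ℝ) (hq0 : 0 < q) (hq1 : q < 1) :
    pTilde q 0 = 1 ∧
    ∀ N : ℕ, pTilde q (N + 1) =
      C (q ^ 2) * X * pTilde q N -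
        C (q ^ 2)⁻¹ * (X - 1) * ((pTilde q N).comp (C (q ^ 2)⁻¹ * X)) := by
  have hq : q ^ 2 ≠ 1 := (pow_lt_one₀ hq0.le hq1 two_ne_zero).ne
  refine ⟨by simp [pTilde, qPolyF, gaussBinom, qPoch], fun N => ?_⟩
  rw [C_mul_X_mul_pTilde hq0.ne', C_inv_mul_X_sub_one_mul_pTilde_comp, sub_neg_eq_add,
    pTilde_eq_sum]
  apply sum_range_succ_succ_of_pascal
  · rw [pTildeCoeff_succ_zero hq0.ne' hq, pow_zero, mul_one, Nat.sub_zero, Nat.sub_zero]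
  · rw [pTildeCoeff_succ_self hq0.ne' hq, Nat.sub_self, Nat.sub_self]
  · intro i hi
    rw [pTildeCoeff_succ_succ hq0.ne' hq hi, C_add, add_mul,
      show N + 1 - (i + 1) = N - i by omega, show N - (i + 1) + 1 = N - i by omega]
end

section
/- (Noncommutative product identity from the proof of Proposition 4.11.) Let R be an associative unital algebra over ℂ and let q be a nonzero complex number. Suppose u, v, t ∈ R satisfy u·t = q^{−2}·t·u and u·v = 1 − t. Then for all natural numbers m and n: uᵐ·vᵐ = ∏_{l=0}^{m−1} (1 − q^{−2l} t), and uᵐ·tⁿ·vᵐ = q^{−2mn} · tⁿ · ∏_{l=0}^{m−1} (1 − q^{−2l} t). (In SU_q(2) this applies with u = α*, v = α, t = γ*γ, giving (α*)ᵐ(γ*γ)ⁿαᵐ = f_{n,m}(γ*γ).) -/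
/-!
Write `c = q⁻²`, so that `u t = c t u`. Commuting `u` past `tⁿ` gives `u tⁿ = cⁿ tⁿ u`, hence
`u tⁿ v = cⁿ (tⁿ - tⁿ⁺¹)`. Peeling one `u` and one `v` off `uᵐ⁺¹ tⁿ vᵐ⁺¹` thus expresses it through
`uᵐ tⁿ vᵐ` and `uᵐ tⁿ⁺¹ vᵐ`, and induction on `m` (for all `n` at once) produces the factor
`1 - cᵐ t`. The identity for `uᵐ vᵐ` is the case `n = 0`.
-/

def qPochhammer {K R : Type*} [CommSemiring K] [Ring R] [Algebra K R] (c : K) (t : R) (m : ℕ) :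
    R :=
  ((List.range m).map fun l => 1 - c ^ l • t).prod

namespace qPochhammer

variable {K R : Type*} [CommSemiring K] [Ring R] [Algebra K R] (c : K) (t : R)

@[simp]
theorem zero : qPochhammer c t 0 = 1 := rfl

theorem succ (m : ℕ) : qPochhammer c t (m + 1) = qPochhammer c t m * (1 - c ^ m • t) := by
  simp [qPochhammer, List.range_succ]

theorem commute_self (m : ℕ) : Commute t (qPochhammer c t m) :=
  Commute.list_prod_right _ _ fun _ hx => by
    obtain ⟨l, -, rfl⟩ := List.mem_map.mp hx
    exact (Commute.one_right t).sub_right ((Commute.refl t).smul_right _)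

end qPochhammer

section QCommuting

variable {K R : Type*} [CommSemiring K] [Ring R] [Algebra K R] {c : K} {u v t : R}

theorem mul_pow_eq_smul_pow_mul (hut : u * t = c • (t * u)) (n : ℕ) :
    u * t ^ n = c ^ n • (t ^ n * u) := by
  induction n with
  | zero => simp
  | succ n ih =>
    calc u * t ^ (n + 1) = c ^ n • (t ^ n * (u * t)) := by
          rw [pow_succ, ← mul_assoc, ih, smul_mul_assoc, mul_assoc]
      _ = c ^ (n + 1) • (t ^ (n + 1) * u) := by
          rw [hut, mul_smul_comm, smul_smul, ← pow_succ, pow_succ t, mul_assoc]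

theorem mul_pow_mul_eq_smul_sub (hut : u * t = c • (t * u)) (huv : u * v = 1 - t) (n : ℕ) :
    u * t ^ n * v = c ^ n • (t ^ n - t ^ (n + 1)) := by
  rw [mul_pow_eq_smul_pow_mul hut, smul_mul_assoc, mul_assoc, huv, mul_sub, mul_one, pow_succ]

theorem pow_mul_pow_mul_pow_eq_smul_qPochhammer (hut : u * t = c • (t * u))
    (huv : u * v = 1 - t) (m n : ℕ) :
    u ^ m * t ^ n * v ^ m = c ^ (m * n) • (t ^ n * qPochhammer c t m) := by
  induction m generalizing n with
  | zero => simp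
  | succ m ih =>
    calc u ^ (m + 1) * t ^ n * v ^ (m + 1) = u ^ m * (u * t ^ n * v) * v ^ m := by
          rw [pow_succ, pow_succ']; noncomm_ring
      _ = c ^ n • (u ^ m * t ^ n * v ^ m - u ^ m * t ^ (n + 1) * v ^ m) := by
          rw [mul_pow_mul_eq_smul_sub hut huv, mul_smul_comm, smul_mul_assoc]; noncomm_ring
      _ = c ^ (n + m * n) • (t ^ n * qPochhammer c t m)
            - c ^ (n + m * (n + 1)) • (t ^ (n + 1) * qPochhammer c t m) := by
          rw [ih, ih, smul_sub, smul_smul, smul_smul, ← pow_add, ← pow_add]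
      _ = c ^ ((m + 1) * n) • (t ^ n * qPochhammer c t (m + 1)) := by
          rw [qPochhammer.succ, mul_sub, mul_one, mul_sub, mul_smul_comm, mul_smul_comm,
            ← (qPochhammer.commute_self c t m).eq, ← mul_assoc, ← pow_succ,
            smul_sub, smul_smul, ← pow_add]
          congr 3 <;> ring

end QCommuting

theorem pow_mul_pow_eq_qProd_general {R : Type*} [Ring R] [Algebra ℂ R] (q : ℂ)
    (u v t : R) (hut : u * t = ((q ^ 2 : ℂ))⁻¹ • (t * u)) (huv : u * v = 1 - t) :
    ∀ m n : ℕ,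
      u ^ m * v ^ m =
        ((List.range m).map (fun l => 1 - ((q ^ (2 * l) : ℂ))⁻¹ • t)).prod ∧
      u ^ m * t ^ n * v ^ m =
        ((q ^ (2 * m * n) : ℂ))⁻¹ •
          (t ^ n * ((List.range m).map (fun l => 1 - ((q ^ (2 * l) : ℂ))⁻¹ • t)).prod) := by
  have hpow (k : ℕ) : (q ^ (2 * k))⁻¹ = (q ^ 2)⁻¹ ^ k := by rw [pow_mul, inv_pow]
  have key := pow_mul_pow_mul_pow_eq_smul_qPochhammer hut huv
  simp only [qPochhammer, ← hpow, ← mul_assoc] at key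
  intro m n
  exact ⟨by simpa using key m 0, key m n⟩

/-- Noncommutative product identity from the proof of Proposition 4.11: in a unital ℂ-algebra,
if `u t = q⁻² t u` and `u v = 1 − t`, then for all `m n`:
`uᵐ vᵐ = ∏_{l<m} (1 − q^(−2l) t)` and
`uᵐ tⁿ vᵐ = q^(−2mn) tⁿ ∏_{l<m} (1 − q^(−2l) t)` (products taken in increasing order of `l`).
(In `SU_q(2)` this applies with `u = α*`, `v = α`, `t = γ*γ`.) -/
theorem pow_mul_pow_eq_qProd {R : Type*} [Ring R] [Algebra ℂ R] (q : ℂ) (hq : q ≠ 0)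
    (u v t : R) (hut : u * t = ((q ^ 2 : ℂ))⁻¹ • (t * u)) (huv : u * v = 1 - t) :
    ∀ m n : ℕ,
      u ^ m * v ^ m =
        ((List.range m).map (fun l => 1 - ((q ^ (2 * l) : ℂ))⁻¹ • t)).prod ∧
      u ^ m * t ^ n * v ^ m =
        ((q ^ (2 * m * n) : ℂ))⁻¹ •
          (t ^ n * ((List.range m).map (fun l => 1 - ((q ^ (2 * l) : ℂ))⁻¹ • t)).prod) :=
  pow_mul_pow_eq_qProd_general q u v t hut huv
end
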